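/- Let L be convolution with an even, positive, integrable kernel K with ∫K = 1, and let μ ∈ ℝ. If φ₁ is a bounded continuous supersolution (−μφ₁ + Lφ₁ + φ₁² ≤ 0), then inf φ₁ lies in the closed interval with endpoints μ−1 and 0; if φ₂ is a bounded continuous subsolution (−μφ₂ + Lφ₂ + φ₂² ≥ 0), then sup φ₂ lies outside the open interval with endpoints μ−1 and 0. -/

import Mathlib

/-!
Bounding the convolution term by the extremal value turns the nonlocal inequality into a pointwise
quadratic one: for a supersolution with `m = inf φ₁` we get `φ₁² - μ φ₁ + m ≤ 0` everywhere.
Evaluating along values approaching the infimum gives `m² - μ m + m ≤ 0`, that is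
`m (m - (μ - 1)) ≤ 0`, so `m` lies between `μ - 1` and `0`. Dually `s = sup φ₂` satisfies
`s (s - (μ - 1)) ≥ 0`.
-/

open MeasureTheory Set

section Averaging

variable {α : Type*} [MeasurableSpace α] {ν : Measure α} {w f : α → ℝ}

theorem integrable_mul_of_abs_le (hw : Integrable w ν) (hf : AEStronglyMeasurable f ν) {M : ℝ}
    (hM : ∀ y, |f y| ≤ M) : Integrable (fun y ↦ w y * f y) ν := by
  simpa only [mul_comm] using hw.bdd_mul hf (c := M) (.of_forall fun y ↦ by simpa using hM y)

theorem le_integral_mul_of_forall_le (hw0 : ∀ y, 0 ≤ w y) (hw : Integrable w ν)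
    (hw1 : ∫ y, w y ∂ν = 1) (hf : AEStronglyMeasurable f ν) {M : ℝ} (hM : ∀ y, |f y| ≤ M) {a : ℝ}
    (ha : ∀ y, a ≤ f y) : a ≤ ∫ y, w y * f y ∂ν :=
  calc a = ∫ y, w y * a ∂ν := by rw [integral_mul_const, hw1, one_mul]
    _ ≤ ∫ y, w y * f y ∂ν := integral_mono (hw.mul_const a) (integrable_mul_of_abs_le hw hf hM)
        fun y ↦ mul_le_mul_of_nonneg_left (ha y) (hw0 y)

theorem integral_mul_le_of_forall_le (hw0 : ∀ y, 0 ≤ w y) (hw : Integrable w ν)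
    (hw1 : ∫ y, w y ∂ν = 1) (hf : AEStronglyMeasurable f ν) {M : ℝ} (hM : ∀ y, |f y| ≤ M) {b : ℝ}
    (hb : ∀ y, f y ≤ b) : ∫ y, w y * f y ∂ν ≤ b :=
  calc ∫ y, w y * f y ∂ν ≤ ∫ y, w y * b ∂ν :=
        integral_mono (integrable_mul_of_abs_le hw hf hM) (hw.mul_const b)
          fun y ↦ mul_le_mul_of_nonneg_left (hb y) (hw0 y)
    _ = b := by rw [integral_mul_const, hw1, one_mul]

end Averaging

section Extrema

variable {ι : Type*} {φ : ι → ℝ} {M : ℝ}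

theorem bddBelow_range_of_abs_le (hM : ∀ x, |φ x| ≤ M) : BddBelow (range φ) :=
  ⟨-M, forall_mem_range.2 fun x ↦ (abs_le.1 (hM x)).1⟩

theorem bddAbove_range_of_abs_le (hM : ∀ x, |φ x| ≤ M) : BddAbove (range φ) :=
  ⟨M, forall_mem_range.2 fun x ↦ (abs_le.1 (hM x)).2⟩

theorem Continuous.apply_csInf_range_nonpos [Nonempty ι] {g : ℝ → ℝ} (hg : Continuous g)
    (hφ : BddBelow (range φ)) (h : ∀ x, g (φ x) ≤ 0) : g (sInf (range φ)) ≤ 0 := by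
  have hsub : closure (range φ) ⊆ {t | g t ≤ 0} :=
    closure_minimal (forall_mem_range.2 h) (isClosed_le hg continuous_const)
  exact hsub (csInf_mem_closure (range_nonempty φ) hφ)

theorem Continuous.apply_csSup_range_nonneg [Nonempty ι] {g : ℝ → ℝ} (hg : Continuous g)
    (hφ : BddAbove (range φ)) (h : ∀ x, 0 ≤ g (φ x)) : 0 ≤ g (sSup (range φ)) := by
  have hsub : closure (range φ) ⊆ {t | 0 ≤ g t} :=
    closure_minimal (forall_mem_range.2 h) (isClosed_le continuous_const hg)
  exact hsub (csSup_mem_closure (range_nonempty φ) hφ)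

end Extrema

theorem mem_uIcc_zero_of_mul_sub_nonpos {m c : ℝ} (h : m * (m - c) ≤ 0) : m ∈ uIcc c 0 := by
  rcases mul_nonpos_iff.1 h with ⟨hm, hmc⟩ | ⟨hm, hmc⟩
  · exact mem_uIcc.2 (Or.inr ⟨by linarith, by linarith⟩)
  · exact mem_uIcc.2 (Or.inl ⟨by linarith, hm⟩)

theorem notMem_uIoo_zero_of_mul_sub_nonneg {s c : ℝ} (h : 0 ≤ s * (s - c)) : s ∉ uIoo c 0 := by
  intro hs
  rw [uIoo, mem_Ioo] at hs
  rcases le_total c 0 with hc | hc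
  · rw [min_eq_left hc, max_eq_right hc] at hs
    nlinarith [hs.1, hs.2]
  · rw [min_eq_right hc, max_eq_left hc] at hs
    nlinarith [hs.1, hs.2]

section Kernel

variable {K f : ℝ → ℝ} {M : ℝ}

theorem csInf_range_le_integral_sub_mul (hK0 : ∀ x, 0 ≤ K x) (hK : Integrable K)
    (hK1 : ∫ x, K x = 1) (hf : AEStronglyMeasurable f) (hM : ∀ x, |f x| ≤ M) (x : ℝ) :
    sInf (range f) ≤ ∫ y, K (x - y) * f y :=
  le_integral_mul_of_forall_le (fun _ ↦ hK0 _) (hK.comp_sub_left x)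
    (by rw [integral_sub_left_eq_self, hK1]) hf hM
    fun y ↦ csInf_le (bddBelow_range_of_abs_le hM) (mem_range_self y)

theorem integral_sub_mul_le_csSup_range (hK0 : ∀ x, 0 ≤ K x) (hK : Integrable K)
    (hK1 : ∫ x, K x = 1) (hf : AEStronglyMeasurable f) (hM : ∀ x, |f x| ≤ M) (x : ℝ) :
    ∫ y, K (x - y) * f y ≤ sSup (range f) :=
  integral_mul_le_of_forall_le (fun _ ↦ hK0 _) (hK.comp_sub_left x)
    (by rw [integral_sub_left_eq_self, hK1]) hf hM
    fun y ↦ le_csSup (bddAbove_range_of_abs_le hM) (mem_range_self y)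

end Kernel

theorem whitham_apriori_bounds (K : ℝ → ℝ) (μ : ℝ)
    (hKpos : ∀ x, 0 < K x)
    (hKint : MeasureTheory.Integrable K) (hK1 : (∫ x, K x) = 1)
    (φ₁ φ₂ : ℝ → ℝ)
    (hc1 : Continuous φ₁) (hb1 : ∃ M, ∀ x, |φ₁ x| ≤ M)
    (hc2 : Continuous φ₂) (hb2 : ∃ M, ∀ x, |φ₂ x| ≤ M)
    (hsuper : ∀ x, -μ * φ₁ x + (∫ y, K (x-y) * φ₁ y) + φ₁ x ^ 2 ≤ 0)
    (hsub : ∀ x, 0 ≤ -μ * φ₂ x + (∫ y, K (x-y) * φ₂ y) + φ₂ x ^ 2) :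
    sInf (Set.range φ₁) ∈ Set.uIcc (μ-1) 0 ∧
    sSup (Set.range φ₂) ∉ Set.uIoo (μ-1) 0 := by
  obtain ⟨M₁, hb1⟩ := hb1
  obtain ⟨M₂, hb2⟩ := hb2
  have hK0 : ∀ x, 0 ≤ K x := fun x ↦ (hKpos x).le
  set m := sInf (range φ₁)
  set s := sSup (range φ₂)
  have hquad1 : ∀ x, φ₁ x ^ 2 - μ * φ₁ x + m ≤ 0 := fun x ↦ by
    linarith [hsuper x,
      csInf_range_le_integral_sub_mul hK0 hKint hK1 hc1.aestronglyMeasurable hb1 x]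
  have hquad2 : ∀ x, 0 ≤ φ₂ x ^ 2 - μ * φ₂ x + s := fun x ↦ by
    linarith [hsub x,
      integral_sub_mul_le_csSup_range hK0 hKint hK1 hc2.aestronglyMeasurable hb2 x]
  have hm : m ^ 2 - μ * m + m ≤ 0 :=
    Continuous.apply_csInf_range_nonpos (g := fun t ↦ t ^ 2 - μ * t + m) (by fun_prop)
      (bddBelow_range_of_abs_le hb1) hquad1
  have hs : 0 ≤ s ^ 2 - μ * s + s :=
    Continuous.apply_csSup_range_nonneg (g := fun t ↦ t ^ 2 - μ * t + s) (by fun_prop)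
      (bddAbove_range_of_abs_le hb2) hquad2
  exact ⟨mem_uIcc_zero_of_mul_sub_nonpos (by linarith),
    notMem_uIoo_zero_of_mul_sub_nonneg (by linarith)⟩
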